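/- Let X ⊆ ℝⁿ be a Borel set, P_x a probability measure on X, (D, 𝒟, P_d) a probability space, and f : X × D → ℝⁿ measurable with respect to the product σ-algebra. Let γ ∈ (0,1) and let h : ℝⁿ → ℝ be Borel measurable with h(y) ≥ 0 for all y ∈ X and h(y) < 0 for all y ∈ ℝⁿ \ X. Let M ≥ 1 be an integer and α₁, α₂, l, δ₂ ∈ (0,1) with α₁ < l·δ₂ and M ≥ (1/(2·α₂²))·ln(1/((1−l)·δ₂)). If (P_x ⊗ P_d^M){(x, d₁,…,d_M) : h(f(x, d_j)) < γ·h(x) for some j ∈ {1,…,M}} ≤ α₁, then P_x{x ∈ X : P_d({d ∈ D : f(x,d) ∈ X}) ≥ 1 − α₂} ≥ 1 − α₁/(l·δ₂). -/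

import Mathlib

/-!
Off the violation set `B x = {d | h (f (x, d)) < γ * h x}` the barrier forces `f (x, d) ∈ X`.
One of `M` independent samples hits `B x` with probability `1 - P_d (B x)ᶜ ^ M`, and the joint
bound together with Markov's inequality makes this smaller than `l δ₂` outside a set of
`P_x`-measure at most `α₁ / (l δ₂)`. There
`P_d (B x)ᶜ ^ M > 1 - l δ₂ ≥ (1 - l) δ₂ ≥ (1 - α₂) ^ M`, the last step by
`1 - t ≤ exp (-2 t²)` and the bound on `M`.
-/

open MeasureTheory

lemma one_sub_le_exp_neg_two_mul_sq {t : ℝ} (ht : 0 ≤ t) : 1 - t ≤ Real.exp (-2 * t ^ 2) := by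
  set φ : ℝ → ℝ := fun t => (1 - t) * Real.exp (2 * t ^ 2)
  have hφ' (t : ℝ) : HasDerivAt φ (-((1 - 2 * t) ^ 2 * Real.exp (2 * t ^ 2))) t := by
    refine (((hasDerivAt_id' t).const_sub 1).fun_mul
      ((hasDerivAt_pow 2 t).const_mul 2).exp).congr_deriv ?_
    norm_num; ring
  have hφ : Antitone φ := antitone_of_deriv_nonpos (fun t => (hφ' t).differentiableAt)
    fun t => (hφ' t).deriv ▸ neg_nonpos.2 (by positivity)
  calc 1 - t = φ t * Real.exp (-2 * t ^ 2) := by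
        rw [mul_assoc, ← Real.exp_add]; simp
    _ ≤ φ 0 * Real.exp (-2 * t ^ 2) := by gcongr; exact hφ ht
    _ = Real.exp (-2 * t ^ 2) := by simp [φ]

lemma one_sub_pow_le_of_log_inv_le {α c : ℝ} {M : ℕ} (hα₀ : 0 ≤ α) (hα₁ : α ≤ 1)
    (hc : 0 < c) (hM : Real.log c⁻¹ ≤ 2 * α ^ 2 * M) : (1 - α) ^ M ≤ c :=
  calc (1 - α) ^ M ≤ Real.exp (-2 * α ^ 2) ^ M :=
        pow_le_pow_left₀ (by linarith) (one_sub_le_exp_neg_two_mul_sq hα₀) M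
    _ = Real.exp (-(2 * α ^ 2 * M)) := by rw [← Real.exp_nat_mul]; ring_nf
    _ ≤ Real.exp (-Real.log c⁻¹) := by gcongr
    _ = c := by rw [Real.log_inv, neg_neg, Real.exp_log hc]

lemma ENNReal.ofReal_le_of_one_sub_pow_lt {p : ENNReal} {r s : ℝ} {M : ℕ} (hr : 0 ≤ r)
    (hrs : r ^ M ≤ 1 - s) (hp : 1 - p ^ M < ENNReal.ofReal s) : ENNReal.ofReal r ≤ p := by
  have hs : s ≤ 1 := by linarith [pow_nonneg hr M]
  by_contra! hpr
  have : ENNReal.ofReal s ≤ 1 - p ^ M := calc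
    ENNReal.ofReal s = 1 - ENNReal.ofReal (1 - s) := by
      rw [← ENNReal.ofReal_one, ← ENNReal.ofReal_sub _ (by linarith)]; ring_nf
    _ ≤ 1 - ENNReal.ofReal r ^ M := by
      gcongr; rw [← ENNReal.ofReal_pow hr]; exact ENNReal.ofReal_le_ofReal hrs
    _ ≤ 1 - p ^ M := by gcongr
  exact this.not_gt hp

section Sampling

variable {Ω D : Type*} [MeasurableSpace Ω] [MeasurableSpace D]

lemma measurableSet_exists_sample {B : Set (Ω × D)} (hB : MeasurableSet B) (M : ℕ) :
    MeasurableSet {p : Ω × (Fin M → D) | ∃ j, (p.1, p.2 j) ∈ B} := by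
  simp only [Set.ofPred_exists]
  exact .iUnion fun j => (measurable_fst.prodMk ((measurable_pi_apply j).comp measurable_snd)) hB

lemma pi_exists_mem_eq_one_sub_pow (ν : Measure D) [IsProbabilityMeasure ν] {C : Set D}
    (hC : MeasurableSet C) (M : ℕ) :
    Measure.pi (fun _ : Fin M => ν) {ω | ∃ j, ω j ∈ C} = 1 - ν Cᶜ ^ M := by
  have hcompl : {ω : Fin M → D | ∃ j, ω j ∈ C}ᶜ = Set.univ.pi fun _ => Cᶜ := by
    ext ω; simp
  have hmeas : MeasurableSet {ω : Fin M → D | ∃ j, ω j ∈ C} := by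
    simp only [Set.ofPred_exists]; exact .iUnion fun j => measurable_pi_apply j hC
  have hpi : Measure.pi (fun _ : Fin M => ν) (Set.univ.pi fun _ => Cᶜ) = ν Cᶜ ^ M := by
    simp [Measure.pi_pi]
  rw [← hpi, ← hcompl, prob_compl_eq_one_sub hmeas,
    ENNReal.sub_sub_cancel ENNReal.one_ne_top prob_le_one]

lemma ofReal_one_sub_div_le_measure_section_lt {E : Type*} [MeasurableSpace E]
    (μ : Measure Ω) [IsProbabilityMeasure μ] (κ : Measure E) [SFinite κ] {A : Set (Ω × E)}
    (hA : MeasurableSet A) {a s : ℝ} (ha : 0 ≤ a) (hs : 0 < s)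
    (hprod : μ.prod κ A ≤ ENNReal.ofReal a) :
    ENNReal.ofReal (1 - a / s) ≤ μ {x | κ (Prod.mk x ⁻¹' A) < ENNReal.ofReal s} := by
  have hq : Measurable fun x => κ (Prod.mk x ⁻¹' A) := measurable_measure_prodMk_left hA
  have hmarkov : μ {x | ENNReal.ofReal s ≤ κ (Prod.mk x ⁻¹' A)} ≤ ENNReal.ofReal (a / s) :=
    calc _ ≤ (∫⁻ x, κ (Prod.mk x ⁻¹' A) ∂μ) / ENNReal.ofReal s :=
          meas_ge_le_lintegral_div hq.aemeasurable (by simpa using hs) ENNReal.ofReal_ne_top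
      _ ≤ ENNReal.ofReal a / ENNReal.ofReal s := by rw [← Measure.prod_apply hA]; gcongr
      _ = ENNReal.ofReal (a / s) := (ENNReal.ofReal_div_of_pos hs).symm
  calc ENNReal.ofReal (1 - a / s) = 1 - ENNReal.ofReal (a / s) := by
        rw [← ENNReal.ofReal_one, ENNReal.ofReal_sub _ (by positivity)]
    _ ≤ 1 - μ {x | ENNReal.ofReal s ≤ κ (Prod.mk x ⁻¹' A)} := by gcongr
    _ = μ {x | κ (Prod.mk x ⁻¹' A) < ENNReal.ofReal s} := by
        rw [← prob_compl_eq_one_sub (measurableSet_le measurable_const hq)]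
        simp only [Set.compl_ofPred, not_le]

theorem ofReal_one_sub_div_le_measure_setOf_ofReal_le_of_prod_pi_le
    (μ : Measure Ω) [IsProbabilityMeasure μ] (ν : Measure D) [IsProbabilityMeasure ν]
    {B : Set (Ω × D)} (hB : MeasurableSet B) {M : ℕ} {a r s : ℝ} (ha : 0 ≤ a) (hr : 0 ≤ r)
    (hs : 0 < s) (hrs : r ^ M ≤ 1 - s)
    (hjoint : μ.prod (Measure.pi fun _ : Fin M => ν) {p | ∃ j, (p.1, p.2 j) ∈ B} ≤
      ENNReal.ofReal a) :
    ENNReal.ofReal (1 - a / s) ≤ μ {x | ENNReal.ofReal r ≤ ν (Prod.mk x ⁻¹' B)ᶜ} := by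
  refine (ofReal_one_sub_div_le_measure_section_lt μ _ (measurableSet_exists_sample hB M) ha hs
    hjoint).trans (measure_mono fun x hx => ENNReal.ofReal_le_of_one_sub_pow_lt hr hrs ?_)
  rwa [← pi_exists_mem_eq_one_sub_pow ν (measurable_prodMk_left hB)]

end Sampling

lemma mem_of_mul_barrier_le {E : Type*} {X : Set E} {h : E → ℝ} (hpos : ∀ y ∈ X, 0 ≤ h y)
    (hneg : ∀ y, y ∉ X → h y < 0) {γ : ℝ} (hγ : 0 ≤ γ) {x y : E} (hx : x ∈ X)
    (hxy : γ * h x ≤ h y) : y ∈ X := by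
  by_contra hy
  linarith [hneg y hy, mul_nonneg hγ (hpos x hx)]

theorem pac_one_step_safety_II_general {n : ℕ} {D : Type*} [MeasurableSpace D]
    (X : Set (Fin n → ℝ))
    (Px : Measure ↥X) (Pd : Measure D)
    [IsProbabilityMeasure Px] [IsProbabilityMeasure Pd]
    (f : ↥X × D → (Fin n → ℝ)) (hf : Measurable f)
    (γ : ℝ) (hγ : γ ∈ Set.Ioo (0 : ℝ) 1)
    (h : (Fin n → ℝ) → ℝ) (hh : Measurable h)
    (hpos : ∀ y ∈ X, 0 ≤ h y) (hneg : ∀ y, y ∉ X → h y < 0)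
    (M : ℕ)
    (α₁ α₂ l δ₂ : ℝ)
    (hα₁ : α₁ ∈ Set.Ioo (0 : ℝ) 1) (hα₂ : α₂ ∈ Set.Ioo (0 : ℝ) 1)
    (hl : l ∈ Set.Ioo (0 : ℝ) 1) (hδ₂ : δ₂ ∈ Set.Ioo (0 : ℝ) 1)
    (hMbound : (M : ℝ) ≥ (1 / (2 * α₂ ^ 2)) * Real.log (1 / ((1 - l) * δ₂)))
    (hjoint : (Px.prod (Measure.pi fun _ : Fin M => Pd))
        {p : ↥X × (Fin M → D) | ∃ j, h (f (p.1, p.2 j)) < γ * h ↑p.1} ≤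
      ENNReal.ofReal α₁) :
    Px {x : ↥X | Pd {d | f (x, d) ∈ X} ≥ ENNReal.ofReal (1 - α₂)} ≥
      ENNReal.ofReal (1 - α₁ / (l * δ₂)) := by
  obtain ⟨hα₂₀, hα₂₁⟩ := hα₂
  obtain ⟨hδ₂₀, hδ₂₁⟩ := hδ₂
  have hMlog : Real.log ((1 - l) * δ₂)⁻¹ ≤ 2 * α₂ ^ 2 * M := calc
    _ = 2 * α₂ ^ 2 * ((1 / (2 * α₂ ^ 2)) * Real.log (1 / ((1 - l) * δ₂))) := by field_simp
    _ ≤ 2 * α₂ ^ 2 * M := by gcongr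
  have hpow : (1 - α₂) ^ M ≤ 1 - l * δ₂ := by
    have hc : 0 < (1 - l) * δ₂ := mul_pos (by linarith [hl.2]) hδ₂₀
    exact (one_sub_pow_le_of_log_inv_le hα₂₀.le hα₂₁.le hc hMlog).trans
      (by nlinarith [hl.1])
  have hviolation : MeasurableSet {p : ↥X × D | h (f p) < γ * h p.1} :=
    measurableSet_lt (hh.comp hf)
      (measurable_const.mul (hh.comp (measurable_subtype_coe.comp measurable_fst)))
  refine (ofReal_one_sub_div_le_measure_setOf_ofReal_le_of_prod_pi_le Px Pd hviolation hα₁.1.le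
    (by linarith) (mul_pos hl.1 hδ₂₀) hpow hjoint).trans (measure_mono fun x hx => ?_)
  refine le_trans hx (measure_mono fun d hd => ?_)
  exact mem_of_mul_barrier_le hpos hneg hγ.1.le x.2 (not_lt.1 hd)

/-- PAC safety certification II (barrier form, one-to-many samples): if the probability
(under `P_x ⊗ P_d^M`) that the barrier decrease condition fails for some of the `M`
disturbance draws is at most `α₁`, and `M` meets the Hoeffding bound, then for at least
a `1 − α₁/(l·δ₂)` fraction of states `x ∈ X` the one-step safety probability is at
least `1 − α₂`. -/
theorem pac_one_step_safety_II {n : ℕ} {D : Type*} [MeasurableSpace D]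
    (X : Set (Fin n → ℝ)) (hX : MeasurableSet X)
    (Px : Measure ↥X) (Pd : Measure D)
    [IsProbabilityMeasure Px] [IsProbabilityMeasure Pd]
    (f : ↥X × D → (Fin n → ℝ)) (hf : Measurable f)
    (γ : ℝ) (hγ : γ ∈ Set.Ioo (0 : ℝ) 1)
    (h : (Fin n → ℝ) → ℝ) (hh : Measurable h)
    (hpos : ∀ y ∈ X, 0 ≤ h y) (hneg : ∀ y, y ∉ X → h y < 0)
    (M : ℕ) (hM : 1 ≤ M)
    (α₁ α₂ l δ₂ : ℝ)
    (hα₁ : α₁ ∈ Set.Ioo (0 : ℝ) 1) (hα₂ : α₂ ∈ Set.Ioo (0 : ℝ) 1)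
    (hl : l ∈ Set.Ioo (0 : ℝ) 1) (hδ₂ : δ₂ ∈ Set.Ioo (0 : ℝ) 1)
    (hlt : α₁ < l * δ₂)
    (hMbound : (M : ℝ) ≥ (1 / (2 * α₂ ^ 2)) * Real.log (1 / ((1 - l) * δ₂)))
    (hjoint : (Px.prod (Measure.pi fun _ : Fin M => Pd))
        {p : ↥X × (Fin M → D) | ∃ j, h (f (p.1, p.2 j)) < γ * h ↑p.1} ≤
      ENNReal.ofReal α₁) :
    Px {x : ↥X | Pd {d | f (x, d) ∈ X} ≥ ENNReal.ofReal (1 - α₂)} ≥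
      ENNReal.ofReal (1 - α₁ / (l * δ₂)) :=
  pac_one_step_safety_II_general X Px Pd f hf γ hγ h hh hpos hneg M α₁ α₂ l δ₂ hα₁ hα₂ hl hδ₂
    hMbound hjoint
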